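/- arXiv:math-ph/0303064 — 5 statements merged into one kernel-verified Lean document; each statement's English description precedes it below -/
import Mathlib

section
/- Two-point scaling limit with smooth cutoff in coordinate space: let n ≥ 1, W ∈ L¹(ℝⁿ) (complex-valued), let f : ℝⁿ → ℝ be bounded, measurable with compact support, and continuous almost everywhere, and let Y ∈ ℝⁿ. Then lim_{R→∞} R^{−n} ∫_{ℝⁿ} ∫_{ℝⁿ} W(x₁ − x₂ + R·Y) · f(x₁/R) · f(x₂/R) dx₁ dx₂ = (∫_{ℝⁿ} W(y) dy) · ∫_{ℝⁿ} f(u − Y) f(u) du. -/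
open MeasureTheory Complex Filter Real Topology

/-! Substituting `y = x₁ - x₂ + R • Y` and rescaling the remaining variable turns
`R^{-n} ∫∫ W(x₁ - x₂ + R • Y) f(x₁/R) f(x₂/R)` into `∫ W(y) g(y/R) dy`, where
`g v = ∫ f(v - Y + u) f(u) du` is an overlap integral of the cutoff. As `f` is bounded, integrable
and continuous almost everywhere, dominated convergence makes `g` bounded and continuous, and a
second application of dominated convergence gives the limit `(∫ W) g(0)`. -/

theorem HasCompactSupport.integrable_of_norm_le {α E : Type*} [TopologicalSpace α]
    [MeasurableSpace α] [OpensMeasurableSpace α] [NormedAddCommGroup E] {μ : Measure α}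
    [IsFiniteMeasureOnCompacts μ] {f : α → E} (hf : HasCompactSupport f)
    (hfm : AEStronglyMeasurable f μ) {C : ℝ} (hfC : ∀ x, ‖f x‖ ≤ C) : Integrable f μ :=
  (integrableOn_iff_integrable_of_support_subset (subset_tsupport f)).1 <|
    Measure.integrableOn_of_bounded hf.measure_lt_top.ne hfm (ae_of_all _ hfC)

section Shear

variable {G F : Type*} [MeasurableSpace G] [AddGroup G] [MeasurableAdd₂ G] [MeasurableNeg G]
  {μ : Measure G} [SFinite μ] [μ.IsAddRightInvariant] [NormedAddCommGroup F] [NormedSpace ℝ F]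

theorem integral_integral_sub_add {H : G × G → F} (hH : Integrable H (μ.prod μ)) (a : G) :
    ∫ x₁, ∫ x₂, H (x₁ - x₂ + a, x₂) ∂μ ∂μ = ∫ y, ∫ x₂, H (y, x₂) ∂μ ∂μ := by
  have hT : MeasurePreserving (fun p : G × G => (p.1 - p.2 + a, p.2)) (μ.prod μ) (μ.prod μ) :=
    ((measurePreserving_add_right μ a).prod (MeasurePreserving.id μ)).comp
      (measurePreserving_sub_prod μ μ)
  calc _ = ∫ p, H (p.1 - p.2 + a, p.2) ∂μ.prod μ :=
        (integral_prod _ ((hT.integrable_comp hH.1).2 hH)).symm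
    _ = ∫ p, H p ∂(μ.prod μ).map _ :=
        (integral_map hT.measurable.aemeasurable (by rw [hT.map_eq]; exact hH.1)).symm
    _ = ∫ p, H p ∂μ.prod μ := by rw [hT.map_eq]
    _ = _ := integral_prod H hH

end Shear

section Overlap

variable {G : Type*} [AddGroup G] [MeasurableSpace G] {μ : Measure G} {f : G → ℝ} {C : ℝ}

noncomputable def overlap (μ : Measure G) (f : G → ℝ) (v : G) : ℝ :=
  ∫ u, f (v + u) * f u ∂μ

theorem abs_overlap_le (hfi : Integrable f μ) (hfC : ∀ x, |f x| ≤ C) (v : G) :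
    |overlap μ f v| ≤ C * ∫ u, |f u| ∂μ := by
  rw [← integral_const_mul (L := ℝ), overlap, ← Real.norm_eq_abs]
  refine norm_integral_le_of_norm_le (hfi.abs.const_mul C) (ae_of_all _ fun u => ?_)
  rw [norm_mul, Real.norm_eq_abs, Real.norm_eq_abs]
  exact mul_le_mul_of_nonneg_right (hfC _) (abs_nonneg _)

theorem continuous_overlap [TopologicalSpace G] [FirstCountableTopology G] [ContinuousAdd G]
    [MeasurableAdd G] [μ.IsAddLeftInvariant] (hfm : Measurable f) (hfi : Integrable f μ)
    (hfC : ∀ x, |f x| ≤ C) (hfc : ∀ᵐ x ∂μ, ContinuousAt f x) : Continuous (overlap μ f) := by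
  refine continuous_iff_continuousAt.2 fun v₀ => ?_
  have hfc' : ∀ᵐ u ∂μ, ContinuousAt f (v₀ + u) :=
    (measurePreserving_add_left μ v₀).quasiMeasurePreserving.ae hfc
  refine continuousAt_of_dominated
    (Eventually.of_forall fun v =>
      ((hfm.comp (measurable_const_add v)).mul hfm).aestronglyMeasurable)
    (Eventually.of_forall fun v => ae_of_all _ fun u => ?_) (hfi.abs.const_mul C) ?_
  · rw [norm_mul, Real.norm_eq_abs, Real.norm_eq_abs]
    exact mul_le_mul_of_nonneg_right (hfC _) (abs_nonneg _)
  · filter_upwards [hfc'] with u hu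
    exact (hu.comp (f := fun v => v + u) (continuous_add_const u).continuousAt).mul
      continuousAt_const

end Overlap

section Scaling

variable {E : Type*} [NormedAddCommGroup E] [NormedSpace ℝ E] [MeasurableSpace E]

theorem tendsto_integral_mul_comp_inv_smul [OpensMeasurableSpace E] {μ : Measure E}
    {W g : E → ℂ} (hW : Integrable W μ) (hg : Continuous g) {M : ℝ} (hgM : ∀ v, ‖g v‖ ≤ M) :
    Tendsto (fun R : ℝ => ∫ y, W y * g (R⁻¹ • y) ∂μ) atTop (𝓝 ((∫ y, W y ∂μ) * g 0)) := by
  rw [← integral_mul_const]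
  refine tendsto_integral_filter_of_dominated_convergence (fun y => ‖W y‖ * M)
    (Eventually.of_forall fun R : ℝ =>
      hW.1.mul (hg.comp (continuous_const_smul R⁻¹)).aestronglyMeasurable)
    (Eventually.of_forall fun R : ℝ => ae_of_all _ fun y => ?_) (hW.norm.mul_const M)
    (ae_of_all _ fun y => ?_)
  · rw [norm_mul]
    exact mul_le_mul_of_nonneg_left (hgM _) (norm_nonneg _)
  · have hy : Tendsto (fun R : ℝ => R⁻¹ • y) atTop (𝓝 0) := by
      simpa using (tendsto_inv_atTop_zero (𝕜 := ℝ)).smul_const y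
    exact ((hg.tendsto 0).comp hy).const_mul (W y)

variable [BorelSpace E] [FiniteDimensional ℝ E] {μ : Measure E} [μ.IsAddHaarMeasure]

theorem integral_mul_comp_inv_smul_eq_overlap (f : E → ℝ) {R : ℝ} (hR : 0 ≤ R) (v : E) :
    ∫ x, f (v + R⁻¹ • x) * f (R⁻¹ • x) ∂μ = R ^ Module.finrank ℝ E * overlap μ f v :=
  Measure.integral_comp_inv_smul_of_nonneg μ (fun u => f (v + u) * f u) hR

theorem integral_integral_two_point_eq_overlap {W : E → ℂ} (hW : Integrable W μ) {f : E → ℝ}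
    (hfm : Measurable f) (hfi : Integrable f μ) {C : ℝ} (hfC : ∀ x, |f x| ≤ C) (Y : E) {R : ℝ}
    (hR : 0 < R) :
    ∫ x₁, ∫ x₂, W (x₁ - x₂ + R • Y) * (f (R⁻¹ • x₁) : ℂ) * (f (R⁻¹ • x₂) : ℂ) ∂μ ∂μ =
      ((R ^ Module.finrank ℝ E : ℝ) : ℂ) * ∫ y, W y * (overlap μ f (R⁻¹ • y - Y) : ℂ) ∂μ := by
  set H : E × E → ℂ := fun q => W q.1 * (f (R⁻¹ • (q.1 + q.2 - R • Y)) : ℂ) * (f (R⁻¹ • q.2) : ℂ)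
  have hH : Integrable H (μ.prod μ) := by
    have hfR : Measurable fun x : E => (f (R⁻¹ • x) : ℂ) :=
      continuous_ofReal.measurable.comp (hfm.comp (measurable_const_smul R⁻¹))
    refine (hW.norm.mul_prod ((hfi.comp_smul (inv_ne_zero hR.ne')).norm.const_mul C)).mono'
      (((hW.1.comp_quasiMeasurePreserving Measure.quasiMeasurePreserving_fst).mul
        (hfR.comp ((measurable_fst.add measurable_snd).sub_const _)).aestronglyMeasurable).mul
        (hfR.comp measurable_snd).aestronglyMeasurable) (ae_of_all _ fun q => ?_)
    simp only [H, norm_mul, norm_real, Real.norm_eq_abs]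
    rw [mul_assoc]
    gcongr
    exact hfC _
  have hx₁ : ∀ x₁ x₂ : E, x₁ - x₂ + R • Y + x₂ - R • Y = x₁ := fun _ _ => by abel
  calc _ = ∫ x₁, ∫ x₂, H (x₁ - x₂ + R • Y, x₂) ∂μ ∂μ := by simp only [H, hx₁]
    _ = ∫ y, ∫ x₂, H (y, x₂) ∂μ ∂μ := integral_integral_sub_add hH _
    _ = _ := by
      rw [← integral_const_mul]
      refine integral_congr_ae (ae_of_all _ fun y => ?_)
      have harg : ∀ x : E, R⁻¹ • (y + x - R • Y) = (R⁻¹ • y - Y) + R⁻¹ • x := fun x => by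
        rw [smul_sub, smul_add, smul_smul, inv_mul_cancel₀ hR.ne', one_smul]; abel
      simp only [H, harg, mul_assoc, ← ofReal_mul]
      rw [integral_const_mul, integral_complex_ofReal,
        integral_mul_comp_inv_smul_eq_overlap f hR.le]
      push_cast
      ring

end Scaling

theorem smooth_cutoff_two_point_limit_general {n : ℕ}
    (W : EuclideanSpace ℝ (Fin n) → ℂ)
    (hW : Integrable W (volume : Measure (EuclideanSpace ℝ (Fin n))))
    (f : EuclideanSpace ℝ (Fin n) → ℝ)
    (hfmeas : Measurable f) (C : ℝ) (hfbd : ∀ x, |f x| ≤ C)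
    (hfsupp : HasCompactSupport f)
    (hfcont : ∀ᵐ x ∂(volume : Measure (EuclideanSpace ℝ (Fin n))), ContinuousAt f x)
    (Y : EuclideanSpace ℝ (Fin n)) :
    Tendsto (fun R : ℝ =>
        ((R ^ (-(n : ℝ)) : ℝ) : ℂ) *
          ∫ x₁ : EuclideanSpace ℝ (Fin n), ∫ x₂ : EuclideanSpace ℝ (Fin n),
            W (x₁ - x₂ + R • Y) * ((f (R⁻¹ • x₁) : ℝ) : ℂ) * ((f (R⁻¹ • x₂) : ℝ) : ℂ))
      atTop
      (𝓝 ((∫ y : EuclideanSpace ℝ (Fin n), W y) *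
        ((∫ u : EuclideanSpace ℝ (Fin n), f (u - Y) * f u : ℝ) : ℂ))) := by
  have hfint : Integrable f volume := hfsupp.integrable_of_norm_le hfmeas.aestronglyMeasurable
    fun x => (hfbd x).trans_eq' (norm_eq_abs _)
  set g : EuclideanSpace ℝ (Fin n) → ℂ := fun v => overlap volume f (v - Y)
  have hg : Continuous g := continuous_ofReal.comp
    ((continuous_overlap hfmeas hfint hfbd hfcont).comp (continuous_sub_right Y))
  have hgM : ∀ v, ‖g v‖ ≤ C * ∫ u, |f u| := fun v => by
    simpa only [g, norm_real, Real.norm_eq_abs] using abs_overlap_le hfint hfbd (v - Y)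
  have hg0 : g 0 = ((∫ u, f (u - Y) * f u : ℝ) : ℂ) := by
    simp only [g, overlap, zero_sub, neg_add_eq_sub]
  rw [← hg0]
  refine (tendsto_integral_mul_comp_inv_smul hW hg hgM).congr' ?_
  filter_upwards [eventually_gt_atTop 0] with R hR
  rw [integral_integral_two_point_eq_overlap hW hfmeas hfint hfbd Y hR, finrank_euclideanSpace_fin,
    ← mul_assoc, ← ofReal_mul, Real.rpow_neg hR.le, Real.rpow_natCast,
    inv_mul_cancel₀ (pow_ne_zero _ hR.ne'), ofReal_one, one_mul]

/-- Two-point scaling limit with smooth cutoff in coordinate space: for integrable `W` and a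
bounded, compactly supported, a.e. continuous cutoff `f`,
`R^{−n} ∫∫ W(x₁ − x₂ + R·Y) f(x₁/R) f(x₂/R) dx₁ dx₂ → (∫ W) · ∫ f(u − Y) f(u) du`. -/
theorem smooth_cutoff_two_point_limit {n : ℕ} (hn : 1 ≤ n)
    (W : EuclideanSpace ℝ (Fin n) → ℂ)
    (hW : Integrable W (volume : Measure (EuclideanSpace ℝ (Fin n))))
    (f : EuclideanSpace ℝ (Fin n) → ℝ)
    (hfmeas : Measurable f) (C : ℝ) (hfbd : ∀ x, |f x| ≤ C)
    (hfsupp : HasCompactSupport f)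
    (hfcont : ∀ᵐ x ∂(volume : Measure (EuclideanSpace ℝ (Fin n))), ContinuousAt f x)
    (Y : EuclideanSpace ℝ (Fin n)) :
    Tendsto (fun R : ℝ =>
        ((R ^ (-(n : ℝ)) : ℝ) : ℂ) *
          ∫ x₁ : EuclideanSpace ℝ (Fin n), ∫ x₂ : EuclideanSpace ℝ (Fin n),
            W (x₁ - x₂ + R • Y) * ((f (R⁻¹ • x₁) : ℝ) : ℂ) * ((f (R⁻¹ • x₂) : ℝ) : ℂ))
      atTop
      (𝓝 ((∫ y : EuclideanSpace ℝ (Fin n), W y) *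
        ((∫ u : EuclideanSpace ℝ (Fin n), f (u - Y) * f u : ℝ) : ℂ))) :=
  smooth_cutoff_two_point_limit_general W hW f hfmeas C hfbd hfsupp hfcont Y
end

section
/- Critical two-point scaling limit for power-law decaying correlations: let n ≥ 1, 0 < α < n, c ∈ ℂ, and let W : ℝⁿ → ℂ be measurable with sup_{|x|≥1} |W(x)| · |x|^{n−α} < ∞ and W(x) · |x|^{n−α} → c as |x| → ∞. Let f : ℝⁿ → ℝ be continuous with support contained in the closed ball of radius r, and let Y ∈ ℝⁿ with |Y| > 2r. Then lim_{R→∞} R^{n−α} ∫_{ℝⁿ} ∫_{ℝⁿ} W(R·(x₁ − x₂ + Y)) f(x₁) f(x₂) dx₁ dx₂ = c · ∫_{ℝⁿ} |y + Y|^{−(n−α)} (f ∗ f)(y) dy, where (f ∗ f)(y) = ∫_{ℝⁿ} f(y + x) f(x) dx. -/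
open MeasureTheory Complex Filter Real Topology

set_option maxHeartbeats 1600000 in
/-- Critical two-point scaling limit for power-law decaying correlations: if `W` decays like
`c·|x|^{−(n−α)}` at infinity, `f` is continuous with support in the ball of radius `r`, and
`|Y| > 2r`, then `R^{n−α} ∫∫ W(R(x₁−x₂+Y)) f(x₁) f(x₂) dx₁ dx₂` converges to
`c · ∫ |y+Y|^{−(n−α)} (f∗f)(y) dy`. -/
theorem critical_two_point_scaling_limit {n : ℕ} (hn : 1 ≤ n) (α : ℝ)
    (hα0 : 0 < α) (hαn : α < n) (c : ℂ)
    (W : EuclideanSpace ℝ (Fin n) → ℂ) (hWmeas : Measurable W)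
    (C : ℝ) (hWbd : ∀ x : EuclideanSpace ℝ (Fin n), 1 ≤ ‖x‖ → ‖W x‖ * ‖x‖ ^ ((n : ℝ) - α) ≤ C)
    (hWlim : ∀ ε > 0, ∃ M : ℝ, ∀ x : EuclideanSpace ℝ (Fin n), M ≤ ‖x‖ →
      ‖W x * ((‖x‖ ^ ((n : ℝ) - α) : ℝ) : ℂ) - c‖ < ε)
    (f : EuclideanSpace ℝ (Fin n) → ℝ) (hf : Continuous f) (r : ℝ)
    (hfsupp : Function.support f ⊆ Metric.closedBall (0 : EuclideanSpace ℝ (Fin n)) r)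
    (Y : EuclideanSpace ℝ (Fin n)) (hY : 2 * r < ‖Y‖) :
    Tendsto (fun R : ℝ =>
        ((R ^ ((n : ℝ) - α) : ℝ) : ℂ) *
          ∫ x₁ : EuclideanSpace ℝ (Fin n), ∫ x₂ : EuclideanSpace ℝ (Fin n),
            W (R • (x₁ - x₂ + Y)) * ((f x₁ : ℝ) : ℂ) * ((f x₂ : ℝ) : ℂ))
      atTop
      (𝓝 (c * ∫ y : EuclideanSpace ℝ (Fin n),
        ((‖y + Y‖ ^ (-((n : ℝ) - α)) : ℝ) : ℂ) *
          ((∫ x : EuclideanSpace ℝ (Fin n), f (y + x) * f x : ℝ) : ℂ))) := by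
  set β : ℝ := (n : ℝ) - α with hβdef
  have hβpos : 0 < β := by rw [hβdef]; linarith
  set D : ℝ := ‖Y‖ - 2 * r with hDdef
  have hDpos : 0 < D := by rw [hDdef]; linarith
  -- support facts
  have hfr : ∀ x, f x ≠ 0 → ‖x‖ ≤ r := by
    intro x hx
    have := hfsupp (Function.mem_support.mpr hx)
    simpa [Metric.mem_closedBall, dist_zero_right] using this
  have hzD : ∀ x₁ x₂ : EuclideanSpace ℝ (Fin n), f x₁ ≠ 0 → f x₂ ≠ 0 →
      D ≤ ‖x₁ - x₂ + Y‖ := by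
    intro x₁ x₂ h1 h2
    have h1' := hfr _ h1
    have h2' := hfr _ h2
    have h3 : ‖x₁ - x₂‖ ≤ 2 * r :=
      le_trans (norm_sub_le _ _) (by linarith)
    have h4 := norm_sub_le (x₁ - x₂ + Y) (x₁ - x₂)
    have h5 : x₁ - x₂ + Y - (x₁ - x₂) = Y := by abel
    rw [h5] at h4
    rw [hDdef]; linarith
  have hC0 : 0 ≤ C := by
    have h1 : ‖(EuclideanSpace.single (⟨0, hn⟩ : Fin n) (1 : ℝ) :
        EuclideanSpace ℝ (Fin n))‖ = 1 := by
      rw [EuclideanSpace.norm_single]; norm_num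
    refine le_trans ?_ (hWbd _ (le_of_eq h1.symm))
    exact mul_nonneg (norm_nonneg _) (Real.rpow_nonneg (norm_nonneg _) _)
  have hfint : Integrable f := by
    refine hf.integrable_of_hasCompactSupport
      (HasCompactSupport.intro (isCompact_closedBall (0 : EuclideanSpace ℝ (Fin n)) r) ?_)
    intro x hx
    by_contra h
    exact hx (hfsupp (Function.mem_support.mpr h))
  have hkey : ∀ R : ℝ, 0 < R → ∀ z : EuclideanSpace ℝ (Fin n), 0 < ‖z‖ →
      ‖z‖ ^ (-β) * ‖R • z‖ ^ β = R ^ β := by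
    intro R hR z hz
    rw [norm_smul, Real.norm_eq_abs, abs_of_pos hR, Real.mul_rpow hR.le (norm_nonneg z),
      Real.rpow_neg (norm_nonneg z)]
    have hzb : ‖z‖ ^ β ≠ 0 := (Real.rpow_pos_of_pos hz β).ne'
    field_simp
  -- measurability
  have hπ : Measurable fun p : EuclideanSpace ℝ (Fin n) × EuclideanSpace ℝ (Fin n) =>
      p.1 - p.2 + Y := (measurable_fst.sub measurable_snd).add_const Y
  have hmf1 : Measurable fun p : EuclideanSpace ℝ (Fin n) × EuclideanSpace ℝ (Fin n) =>
      ((f p.1 : ℝ) : ℂ) := Complex.measurable_ofReal.comp (hf.measurable.comp measurable_fst)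
  have hmf2 : Measurable fun p : EuclideanSpace ℝ (Fin n) × EuclideanSpace ℝ (Fin n) =>
      ((f p.2 : ℝ) : ℂ) := Complex.measurable_ofReal.comp (hf.measurable.comp measurable_snd)
  -- integrability of G
  have hGint : Integrable (fun p : EuclideanSpace ℝ (Fin n) × EuclideanSpace ℝ (Fin n) =>
      (c * ((‖p.1 - p.2 + Y‖ ^ (-β) : ℝ) : ℂ)) * (((f p.1 : ℝ) : ℂ) * ((f p.2 : ℝ) : ℂ)))
      ((volume : Measure (EuclideanSpace ℝ (Fin n))).prod volume) := by
    refine Integrable.mono' ((hfint.abs.mul_prod hfint.abs).const_mul (‖c‖ * D ^ (-β)))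
      ?_ (Filter.Eventually.of_forall ?_)
    · exact ((measurable_const.mul (Complex.measurable_ofReal.comp
        (hπ.norm.pow_const (-β)))).mul (hmf1.mul hmf2)).aestronglyMeasurable
    · intro p
      by_cases h1 : f p.1 = 0
      · simp [h1]
      by_cases h2 : f p.2 = 0
      · simp [h2]
      have hzn := hzD p.1 p.2 h1 h2
      simp only [norm_mul, Complex.norm_real, Real.norm_eq_abs]
      rw [_root_.abs_of_nonneg (Real.rpow_nonneg (norm_nonneg _) _)]
      refine mul_le_mul_of_nonneg_right ?_ (by positivity)
      refine mul_le_mul_of_nonneg_left ?_ (norm_nonneg c)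
      exact Real.rpow_le_rpow_of_nonpos hDpos hzn (by linarith)
  -- integrability of F R
  have hFRint : ∀ R : ℝ, 0 < R → 1 ≤ R * D →
      Integrable (fun p : EuclideanSpace ℝ (Fin n) × EuclideanSpace ℝ (Fin n) =>
        (((R ^ β : ℝ) : ℂ) * W (R • (p.1 - p.2 + Y))) * (((f p.1 : ℝ) : ℂ) * ((f p.2 : ℝ) : ℂ)))
      ((volume : Measure (EuclideanSpace ℝ (Fin n))).prod volume) := by
    intro R hRpos hRD
    refine Integrable.mono' ((hfint.abs.mul_prod hfint.abs).const_mul (C * D ^ (-β)))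
      ?_ (Filter.Eventually.of_forall ?_)
    · exact ((measurable_const.mul (hWmeas.comp ((measurable_const_smul R).comp hπ))).mul
        (hmf1.mul hmf2)).aestronglyMeasurable
    · intro p
      by_cases h1 : f p.1 = 0
      · simp [h1]
      by_cases h2 : f p.2 = 0
      · simp [h2]
      have hzn := hzD p.1 p.2 h1 h2
      have hz0 : 0 < ‖p.1 - p.2 + Y‖ := lt_of_lt_of_le hDpos hzn
      simp only [norm_mul, Complex.norm_real, Real.norm_eq_abs]
      rw [_root_.abs_of_nonneg (Real.rpow_nonneg hRpos.le β)]
      refine mul_le_mul_of_nonneg_right ?_ (by positivity)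
      have h1n : 1 ≤ ‖R • (p.1 - p.2 + Y)‖ := by
        rw [norm_smul, Real.norm_eq_abs, abs_of_pos hRpos]
        calc (1 : ℝ) ≤ R * D := hRD
        _ ≤ R * ‖p.1 - p.2 + Y‖ := mul_le_mul_of_nonneg_left hzn hRpos.le
      have h2n := hWbd _ h1n
      calc R ^ β * ‖W (R • (p.1 - p.2 + Y))‖
          = ‖p.1 - p.2 + Y‖ ^ (-β) *
              (‖W (R • (p.1 - p.2 + Y))‖ * ‖R • (p.1 - p.2 + Y)‖ ^ β) := by
            rw [← hkey R hRpos _ hz0]; ring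
        _ ≤ ‖p.1 - p.2 + Y‖ ^ (-β) * C :=
            mul_le_mul_of_nonneg_left h2n (Real.rpow_nonneg (norm_nonneg _) _)
        _ ≤ D ^ (-β) * C :=
            mul_le_mul_of_nonneg_right
              (Real.rpow_le_rpow_of_nonpos hDpos hzn (by linarith)) hC0
        _ = C * D ^ (-β) := mul_comm _ _
  -- the identity
  have hId : (∫ p : EuclideanSpace ℝ (Fin n) × EuclideanSpace ℝ (Fin n),
        (c * ((‖p.1 - p.2 + Y‖ ^ (-β) : ℝ) : ℂ)) * (((f p.1 : ℝ) : ℂ) * ((f p.2 : ℝ) : ℂ))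
        ∂((volume : Measure (EuclideanSpace ℝ (Fin n))).prod volume))
      = c * ∫ y : EuclideanSpace ℝ (Fin n),
        ((‖y + Y‖ ^ (-β) : ℝ) : ℂ) *
          ((∫ x : EuclideanSpace ℝ (Fin n), f (y + x) * f x : ℝ) : ℂ) := by
    rw [integral_prod _ hGint]
    have stepA : ∀ x₁ : EuclideanSpace ℝ (Fin n),
        (∫ x₂ : EuclideanSpace ℝ (Fin n),
            (c * ((‖x₁ - x₂ + Y‖ ^ (-β) : ℝ) : ℂ)) * (((f x₁ : ℝ) : ℂ) * ((f x₂ : ℝ) : ℂ)))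
        = ∫ u : EuclideanSpace ℝ (Fin n),
            (c * ((‖u + Y‖ ^ (-β) : ℝ) : ℂ)) * (((f x₁ : ℝ) : ℂ) * ((f (x₁ - u) : ℝ) : ℂ)) := by
      intro x₁
      rw [← integral_sub_left_eq_self
        (fun u : EuclideanSpace ℝ (Fin n) =>
          (c * ((‖u + Y‖ ^ (-β) : ℝ) : ℂ)) * (((f x₁ : ℝ) : ℂ) * ((f (x₁ - u) : ℝ) : ℂ)))
        volume x₁]
      congr 1
      ext x₂
      rw [sub_sub_cancel]
    have hNint : Integrable (fun p : EuclideanSpace ℝ (Fin n) × EuclideanSpace ℝ (Fin n) =>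
        |f p.1| * |f (p.1 - p.2)|)
        (volume : Measure (EuclideanSpace ℝ (Fin n) × EuclideanSpace ℝ (Fin n))) := by
      have hcont : Continuous fun p : EuclideanSpace ℝ (Fin n) × EuclideanSpace ℝ (Fin n) =>
          |f p.1| * |f (p.1 - p.2)| :=
        ((hf.comp continuous_fst).abs).mul ((hf.comp (continuous_fst.sub continuous_snd)).abs)
      have hcs : HasCompactSupport
          fun p : EuclideanSpace ℝ (Fin n) × EuclideanSpace ℝ (Fin n) =>
            |f p.1| * |f (p.1 - p.2)| := by
        refine HasCompactSupport.intro
          ((isCompact_closedBall (0 : EuclideanSpace ℝ (Fin n)) r).prod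
            (isCompact_closedBall (0 : EuclideanSpace ℝ (Fin n)) (2 * r))) ?_
        intro p hp
        by_contra h
        have h1 : f p.1 ≠ 0 := fun h0 => h (by simp [h0])
        have h2 : f (p.1 - p.2) ≠ 0 := fun h0 => h (by simp [h0])
        refine hp ?_
        constructor
        · simpa [Metric.mem_closedBall, dist_zero_right] using hfr _ h1
        · have ha := hfr _ h1
          have hb := hfr _ h2
          have hc : ‖p.2‖ ≤ 2 * r := by
            have h4 := norm_sub_le p.1 (p.1 - p.2)
            have h5 : p.1 - (p.1 - p.2) = p.2 := by abel
            rw [h5] at h4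
            linarith
          simpa [Metric.mem_closedBall, dist_zero_right] using hc
      exact hcont.integrable_of_hasCompactSupport hcs
    have hKint : Integrable (Function.uncurry fun x₁ u : EuclideanSpace ℝ (Fin n) =>
        (c * ((‖u + Y‖ ^ (-β) : ℝ) : ℂ)) * (((f x₁ : ℝ) : ℂ) * ((f (x₁ - u) : ℝ) : ℂ)))
        ((volume : Measure (EuclideanSpace ℝ (Fin n))).prod volume) := by
      refine Integrable.mono' (hNint.const_mul (‖c‖ * D ^ (-β))) ?_
        (Filter.Eventually.of_forall ?_)
      · exact ((measurable_const.mul (Complex.measurable_ofReal.comp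
          (((measurable_snd.add_const Y).norm).pow_const (-β)))).mul
          ((Complex.measurable_ofReal.comp (hf.measurable.comp measurable_fst)).mul
            (Complex.measurable_ofReal.comp
              (hf.measurable.comp (measurable_fst.sub measurable_snd))))).aestronglyMeasurable
      · intro p
        simp only [Function.uncurry]
        by_cases h1 : f p.1 = 0
        · simp [h1]
        by_cases h2 : f (p.1 - p.2) = 0
        · simp [h2]
        have hzn : D ≤ ‖p.2 + Y‖ := by
          have h := hzD p.1 (p.1 - p.2) h1 h2
          rwa [sub_sub_cancel] at h
        simp only [norm_mul, Complex.norm_real, Real.norm_eq_abs]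
        rw [_root_.abs_of_nonneg (Real.rpow_nonneg (norm_nonneg _) _)]
        refine mul_le_mul_of_nonneg_right ?_ (by positivity)
        refine mul_le_mul_of_nonneg_left ?_ (norm_nonneg c)
        exact Real.rpow_le_rpow_of_nonpos hDpos hzn (by linarith)
    simp_rw [stepA]
    rw [integral_integral_swap hKint]
    have stepD : ∀ u : EuclideanSpace ℝ (Fin n),
        (∫ x₁ : EuclideanSpace ℝ (Fin n),
          (c * ((‖u + Y‖ ^ (-β) : ℝ) : ℂ)) * (((f x₁ : ℝ) : ℂ) * ((f (x₁ - u) : ℝ) : ℂ)))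
        = (c * ((‖u + Y‖ ^ (-β) : ℝ) : ℂ)) *
            ((∫ x₁ : EuclideanSpace ℝ (Fin n), f x₁ * f (x₁ - u) : ℝ) : ℂ) := by
      intro u
      rw [integral_const_mul]
      congr 1
      simp_rw [← Complex.ofReal_mul]
      exact integral_ofReal
    have stepE : ∀ u : EuclideanSpace ℝ (Fin n),
        (∫ x₁ : EuclideanSpace ℝ (Fin n), f x₁ * f (x₁ - u))
        = ∫ x : EuclideanSpace ℝ (Fin n), f (u + x) * f x := by
      intro u
      rw [← integral_add_right_eq_self (fun x₁ : EuclideanSpace ℝ (Fin n) =>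
        f x₁ * f (x₁ - u)) u]
      congr 1
      ext x
      rw [add_sub_cancel_right, add_comm x u]
    simp_rw [stepD, stepE]
    simp_rw [mul_assoc, integral_const_mul]

  -- rewriting LHS as product integral
  have hLHS : ∀ R : ℝ,
      Integrable (fun p : EuclideanSpace ℝ (Fin n) × EuclideanSpace ℝ (Fin n) =>
        (((R ^ β : ℝ) : ℂ) * W (R • (p.1 - p.2 + Y))) * (((f p.1 : ℝ) : ℂ) * ((f p.2 : ℝ) : ℂ)))
        ((volume : Measure (EuclideanSpace ℝ (Fin n))).prod volume) →
      ((R ^ β : ℝ) : ℂ) *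
          ∫ x₁ : EuclideanSpace ℝ (Fin n), ∫ x₂ : EuclideanSpace ℝ (Fin n),
            W (R • (x₁ - x₂ + Y)) * ((f x₁ : ℝ) : ℂ) * ((f x₂ : ℝ) : ℂ)
        = ∫ p : EuclideanSpace ℝ (Fin n) × EuclideanSpace ℝ (Fin n),
            (((R ^ β : ℝ) : ℂ) * W (R • (p.1 - p.2 + Y))) *
              (((f p.1 : ℝ) : ℂ) * ((f p.2 : ℝ) : ℂ))
          ∂((volume : Measure (EuclideanSpace ℝ (Fin n))).prod volume) := by
    intro R hint
    rw [integral_prod _ hint]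
    simp_rw [mul_assoc, integral_const_mul]
  -- final limit argument
  rw [Metric.tendsto_atTop]
  intro ε hε
  set I : ℝ := ∫ x, |f x| with hIdef
  have hI0 : 0 ≤ I := integral_nonneg fun x => abs_nonneg _
  have hden : 0 < D ^ (-β) * (I * I) + 1 := by positivity
  set ε' : ℝ := ε / (D ^ (-β) * (I * I) + 1) with hε'def
  have hε'pos : 0 < ε' := div_pos hε hden
  obtain ⟨M, hM⟩ := hWlim ε' hε'pos
  refine ⟨max (2 / D) ((|M| + 1) / D), fun R hR => ?_⟩
  have hRD2 : 2 ≤ R * D := by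
    have h := le_trans (le_max_left (2 / D) ((|M| + 1) / D)) hR
    calc (2 : ℝ) = 2 / D * D := by field_simp
    _ ≤ R * D := mul_le_mul_of_nonneg_right h hDpos.le
  have hRDM : |M| + 1 ≤ R * D := by
    have h := le_trans (le_max_right (2 / D) ((|M| + 1) / D)) hR
    calc |M| + 1 = (|M| + 1) / D * D := by field_simp
    _ ≤ R * D := mul_le_mul_of_nonneg_right h hDpos.le
  have hRpos : 0 < R := by nlinarith
  have hFR := hFRint R hRpos (by linarith)
  rw [dist_eq_norm, hLHS R hFR, ← hId, ← integral_sub hFR hGint]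
  have hbdInt : Integrable (fun p : EuclideanSpace ℝ (Fin n) × EuclideanSpace ℝ (Fin n) =>
      (ε' * D ^ (-β)) * (|f p.1| * |f p.2|))
      ((volume : Measure (EuclideanSpace ℝ (Fin n))).prod volume) :=
    (hfint.abs.mul_prod hfint.abs).const_mul _
  have hptwise : ∀ p : EuclideanSpace ℝ (Fin n) × EuclideanSpace ℝ (Fin n),
      ‖(((R ^ β : ℝ) : ℂ) * W (R • (p.1 - p.2 + Y))) * (((f p.1 : ℝ) : ℂ) * ((f p.2 : ℝ) : ℂ))
        - (c * ((‖p.1 - p.2 + Y‖ ^ (-β) : ℝ) : ℂ)) * (((f p.1 : ℝ) : ℂ) * ((f p.2 : ℝ) : ℂ))‖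
      ≤ (ε' * D ^ (-β)) * (|f p.1| * |f p.2|) := by
    intro p
    by_cases h1 : f p.1 = 0
    · simp [h1]
    by_cases h2 : f p.2 = 0
    · simp [h2]
    have hzn := hzD p.1 p.2 h1 h2
    have hz0 : 0 < ‖p.1 - p.2 + Y‖ := lt_of_lt_of_le hDpos hzn
    have hdiff : (((R ^ β : ℝ) : ℂ) * W (R • (p.1 - p.2 + Y))) *
          (((f p.1 : ℝ) : ℂ) * ((f p.2 : ℝ) : ℂ))
        - (c * ((‖p.1 - p.2 + Y‖ ^ (-β) : ℝ) : ℂ)) * (((f p.1 : ℝ) : ℂ) * ((f p.2 : ℝ) : ℂ))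
        = (((R ^ β : ℝ) : ℂ) * W (R • (p.1 - p.2 + Y))
            - c * ((‖p.1 - p.2 + Y‖ ^ (-β) : ℝ) : ℂ)) *
          (((f p.1 : ℝ) : ℂ) * ((f p.2 : ℝ) : ℂ)) := by ring
    rw [hdiff]
    simp only [norm_mul, Complex.norm_real, Real.norm_eq_abs]
    refine mul_le_mul_of_nonneg_right ?_ (by positivity)
    have hco : ((‖p.1 - p.2 + Y‖ ^ (-β) : ℝ) : ℂ) * ((‖R • (p.1 - p.2 + Y)‖ ^ β : ℝ) : ℂ)
        = ((R ^ β : ℝ) : ℂ) := by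
      rw [← Complex.ofReal_mul, hkey R hRpos _ hz0]
    have hfactor : ((R ^ β : ℝ) : ℂ) * W (R • (p.1 - p.2 + Y))
          - c * ((‖p.1 - p.2 + Y‖ ^ (-β) : ℝ) : ℂ)
        = ((‖p.1 - p.2 + Y‖ ^ (-β) : ℝ) : ℂ) *
            (W (R • (p.1 - p.2 + Y)) * ((‖R • (p.1 - p.2 + Y)‖ ^ β : ℝ) : ℂ) - c) := by
      rw [← hco]; ring
    rw [hfactor]
    simp only [norm_mul, Complex.norm_real, Real.norm_eq_abs]
    rw [_root_.abs_of_nonneg (Real.rpow_nonneg (norm_nonneg _) _)]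
    have hMz : M ≤ ‖R • (p.1 - p.2 + Y)‖ := by
      rw [norm_smul, Real.norm_eq_abs, abs_of_pos hRpos]
      calc M ≤ |M| + 1 := by linarith [le_abs_self M]
      _ ≤ R * D := hRDM
      _ ≤ R * ‖p.1 - p.2 + Y‖ := mul_le_mul_of_nonneg_left hzn hRpos.le
    have hWc := hM _ hMz
    calc ‖p.1 - p.2 + Y‖ ^ (-β) *
          ‖W (R • (p.1 - p.2 + Y)) * ((‖R • (p.1 - p.2 + Y)‖ ^ β : ℝ) : ℂ) - c‖
        ≤ D ^ (-β) * ε' :=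
          mul_le_mul (Real.rpow_le_rpow_of_nonpos hDpos hzn (by linarith)) hWc.le
            (norm_nonneg _) (Real.rpow_nonneg hDpos.le _)
      _ = ε' * D ^ (-β) := mul_comm _ _

  calc ‖∫ p : EuclideanSpace ℝ (Fin n) × EuclideanSpace ℝ (Fin n),
        ((((R ^ β : ℝ) : ℂ) * W (R • (p.1 - p.2 + Y))) * (((f p.1 : ℝ) : ℂ) * ((f p.2 : ℝ) : ℂ))
          - (c * ((‖p.1 - p.2 + Y‖ ^ (-β) : ℝ) : ℂ)) * (((f p.1 : ℝ) : ℂ) * ((f p.2 : ℝ) : ℂ)))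
        ∂((volume : Measure (EuclideanSpace ℝ (Fin n))).prod volume)‖
      ≤ ∫ p : EuclideanSpace ℝ (Fin n) × EuclideanSpace ℝ (Fin n),
          (ε' * D ^ (-β)) * (|f p.1| * |f p.2|)
        ∂((volume : Measure (EuclideanSpace ℝ (Fin n))).prod volume) := by
        refine le_trans (norm_integral_le_integral_norm _) ?_
        exact integral_mono (hFR.sub hGint).norm hbdInt hptwise
    _ = (ε' * D ^ (-β)) * (I * I) := by
        rw [integral_const_mul]
        congr 1
        exact integral_prod_mul (fun x => |f x|) (fun x => |f x|)
    _ = ε' * (D ^ (-β) * (I * I)) := by ring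
    _ < ε' * (D ^ (-β) * (I * I) + 1) := by nlinarith
    _ = ε := by rw [hε'def]; field_simp
end

section
/- Vanishing of commutators of critically scaled local observables (strictly localized case): let H be a complex Hilbert space, n ≥ 1, and let A, B : ℝⁿ → B(H) be operator-norm continuous maps into the bounded operators on H with sup_x ‖A(x)‖ ≤ M and sup_x ‖B(x)‖ ≤ M. Let f : ℝⁿ → ℝ be continuous with compact support, and let γ_A, γ_B be real numbers with γ_A + γ_B > n. Suppose there is a compact set S ⊆ ℝⁿ such that A(x) B(y) = B(y) A(x) whenever x − y ∉ S. Define, for R > 0, the Bochner integrals A_R = R^{−γ_A} ∫_{ℝⁿ} f(x/R) A(x) dx and B_R = R^{−γ_B} ∫_{ℝⁿ} f(x/R) B(x) dx. Then ‖A_R B_R − B_R A_R‖ → 0 as R → ∞. -/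
/-!
Expanding both block observables, the commutator `[A_R, B_R]` is the iterated integral of
`f (x/R) f (y/R) [A x, B y]`, whose integrand vanishes unless `x - y ∈ S`. For fixed `x` the inner
integral is thus bounded by a multiple of `vol S`, uniformly in `R`, and `x` ranges over
`R • tsupport f`, of volume `Rⁿ vol (tsupport f)`. Hence `‖[A_R, B_R]‖ = O(R^(n - γ_A - γ_B))`.
-/

open MeasureTheory Complex Filter Real Topology Pointwise

theorem norm_integral_le_of_support_subset {α E : Type*} [MeasurableSpace α] {μ : Measure α}
    [NormedAddCommGroup E] [NormedSpace ℝ E] {f : α → E} {s : Set α} {C : ℝ}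
    (hs : μ s < ⊤) (hfs : Function.support f ⊆ s) (hC : ∀ x ∈ s, ‖f x‖ ≤ C) :
    ‖∫ x, f x ∂μ‖ ≤ C * μ.real s := by
  rw [← setIntegral_eq_integral_of_forall_compl_eq_zero fun x hx ↦
    Function.notMem_support.mp fun h ↦ hx (hfs h)]
  exact norm_setIntegral_le_of_norm_le_const hs hC

theorem smul_mul_smul_sub_smul_mul_smul {𝕜 𝔸 : Type*} [CommSemiring 𝕜] [Ring 𝔸] [Algebra 𝕜 𝔸]
    (s t : 𝕜) (a b : 𝔸) :
    (s • a) * (t • b) - (t • b) * (s • a) = (s * t) • (a * b - b * a) := by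
  rw [smul_mul_smul_comm, smul_mul_smul_comm, mul_comm t s, smul_sub]

theorem norm_mul_sub_mul_le {𝔸 : Type*} [NonUnitalSeminormedRing 𝔸] (a b : 𝔸) :
    ‖a * b - b * a‖ ≤ 2 * ‖a‖ * ‖b‖ := by
  calc ‖a * b - b * a‖ ≤ ‖a‖ * ‖b‖ + ‖b‖ * ‖a‖ :=
        (norm_sub_le _ _).trans (add_le_add (norm_mul_le a b) (norm_mul_le b a))
    _ = 2 * ‖a‖ * ‖b‖ := by ring

section Commutator

variable {α 𝔸 : Type*} [MeasurableSpace α] {μ : Measure α} [NormedRing 𝔸] [NormedAlgebra ℝ 𝔸]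

theorem integral_mul_integral_sub_integral_mul_integral {u v : α → 𝔸}
    (hu : Integrable u μ) (hv : Integrable v μ) :
    (∫ x, u x ∂μ) * (∫ y, v y ∂μ) - (∫ y, v y ∂μ) * (∫ x, u x ∂μ) =
      ∫ x, ∫ y, (u x * v y - v y * u x) ∂μ ∂μ := by
  have inner : ∀ x, ∫ y, (u x * v y - v y * u x) ∂μ =
      u x * ∫ y, v y ∂μ - (∫ y, v y ∂μ) * u x := fun x ↦ by
    rw [integral_sub (hv.const_mul _) (hv.mul_const _), integral_const_mul_of_integrable hv,
      integral_mul_const_of_integrable hv]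
  simp_rw [inner]
  rw [integral_sub (hu.mul_const _) (hu.const_mul _), integral_mul_const_of_integrable hu,
    integral_const_mul_of_integrable hu]

variable [AddGroup α] [MeasurableAdd α] [MeasurableNeg α] [μ.IsAddLeftInvariant] [μ.IsNegInvariant]

theorem norm_integral_mul_integral_sub_le_of_commute_off {u v : α → 𝔸}
    (hu : Integrable u μ) (hv : Integrable v μ) {S K : Set α} (hS : MeasurableSet S)
    (hSμ : μ S < ⊤) (hKμ : μ K < ⊤) (huK : Function.support u ⊆ K) {a b : ℝ}
    (hua : ∀ x, ‖u x‖ ≤ a) (hvb : ∀ y, ‖v y‖ ≤ b)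
    (hcomm : ∀ x y, x - y ∉ S → u x * v y = v y * u x) :
    ‖(∫ x, u x ∂μ) * (∫ y, v y ∂μ) - (∫ y, v y ∂μ) * (∫ x, u x ∂μ)‖ ≤
      2 * a * b * μ.real S * μ.real K := by
  have ha : 0 ≤ a := (norm_nonneg _).trans (hua 0)
  have kernel_le : ∀ x y, ‖u x * v y - v y * u x‖ ≤ 2 * a * b := fun x y ↦
    (norm_mul_sub_mul_le _ _).trans (by gcongr; exacts [hua x, hvb y])
  have inner_le : ∀ x, ‖∫ y, (u x * v y - v y * u x) ∂μ‖ ≤ 2 * a * b * μ.real S := fun x ↦ by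
    have hμ : μ ((x - ·) ⁻¹' S) = μ S :=
      (Measure.measurePreserving_sub_left μ x).measure_preimage hS.nullMeasurableSet
    calc ‖∫ y, (u x * v y - v y * u x) ∂μ‖ ≤ 2 * a * b * μ.real ((x - ·) ⁻¹' S) := by
          refine norm_integral_le_of_support_subset (hμ ▸ hSμ) (fun y hy ↦ ?_)
            fun y _ ↦ kernel_le x y
          by_contra hxy
          exact hy (sub_eq_zero.mpr (hcomm x y hxy))
      _ = 2 * a * b * μ.real S := by rw [Measure.real, hμ, Measure.real]
  rw [integral_mul_integral_sub_integral_mul_integral hu hv]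
  refine norm_integral_le_of_support_subset hKμ (fun x hx ↦ ?_) fun x _ ↦ inner_le x
  by_contra hxK
  simp [Function.notMem_support.mp fun h ↦ hxK (huK h)] at hx

end Commutator

section Scaling

variable {E 𝔸 : Type*} [NormedAddCommGroup E] [NormedSpace ℝ E] [FiniteDimensional ℝ E]
  [MeasurableSpace E] [BorelSpace E] {μ : Measure E} [μ.IsAddHaarMeasure]
  [NormedRing 𝔸] [NormedAlgebra ℝ 𝔸]

theorem measureReal_smul_of_nonneg {R : ℝ} (hR : 0 ≤ R) (s : Set E) :
    μ.real (R • s) = R ^ Module.finrank ℝ E * μ.real s := by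
  rw [Measure.real, Measure.addHaar_smul_of_nonneg μ hR, ENNReal.toReal_mul,
    ENNReal.toReal_ofReal (by positivity), Measure.real]

theorem norm_commutator_integral_comp_inv_smul_le {A B : E → 𝔸} (hA : Continuous A)
    (hB : Continuous B) {M : ℝ} (hAM : ∀ x, ‖A x‖ ≤ M) (hBM : ∀ x, ‖B x‖ ≤ M) {f : E → ℝ}
    (hf : Continuous f) (hfc : HasCompactSupport f) {C : ℝ} (hfC : ∀ x, ‖f x‖ ≤ C)
    {S : Set E} (hS : IsCompact S) (hcomm : ∀ x y, x - y ∉ S → A x * B y = B y * A x)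
    {R : ℝ} (hR : 0 < R) :
    ‖(∫ x, f (R⁻¹ • x) • A x ∂μ) * (∫ x, f (R⁻¹ • x) • B x ∂μ) -
        (∫ x, f (R⁻¹ • x) • B x ∂μ) * (∫ x, f (R⁻¹ • x) • A x ∂μ)‖ ≤
      2 * (C * M) * (C * M) * μ.real S * (R ^ Module.finrank ℝ E * μ.real (tsupport f)) := by
  have hfR : Continuous fun x ↦ f (R⁻¹ • x) := hf.comp (continuous_const_smul _)
  have hfRc : HasCompactSupport fun x ↦ f (R⁻¹ • x) := hfc.comp_smul (inv_ne_zero hR.ne')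
  have hint : ∀ {V : E → 𝔸}, Continuous V → Integrable (fun x ↦ f (R⁻¹ • x) • V x) μ :=
    fun hV ↦ (hfR.smul hV).integrable_of_hasCompactSupport hfRc.smul_right
  have hbound : ∀ {V : E → 𝔸}, (∀ x, ‖V x‖ ≤ M) → ∀ x, ‖f (R⁻¹ • x) • V x‖ ≤ C * M :=
    fun hV x ↦ by
      rw [norm_smul]
      exact mul_le_mul (hfC _) (hV x) (norm_nonneg _) ((norm_nonneg _).trans (hfC 0))
  have hsupp : Function.support (fun x ↦ f (R⁻¹ • x) • A x) ⊆ R • tsupport f :=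
    calc _ ⊆ Function.support fun x ↦ f (R⁻¹ • x) := Function.support_smul_subset_left _ _
      _ = R • Function.support f := support_comp_inv_smul₀ hR.ne' f
      _ ⊆ R • tsupport f := Set.smul_set_mono (subset_tsupport f)
  rw [← measureReal_smul_of_nonneg hR.le]
  refine norm_integral_mul_integral_sub_le_of_commute_off (hint hA) (hint hB) hS.measurableSet
    hS.measure_lt_top (hfc.smul R).measure_lt_top hsupp (hbound hAM) (hbound hBM)
    fun x y hxy ↦ ?_
  rw [smul_mul_smul_comm, smul_mul_smul_comm, hcomm x y hxy, mul_comm (f _)]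

end Scaling

theorem commutator_vanishes_strictly_localized_general {n : ℕ}
    {H : Type*} [NormedAddCommGroup H] [InnerProductSpace ℂ H] [CompleteSpace H]
    (A B : EuclideanSpace ℝ (Fin n) → (H →L[ℂ] H))
    (hA : Continuous A) (hB : Continuous B)
    (M : ℝ) (hAbd : ∀ x, ‖A x‖ ≤ M) (hBbd : ∀ x, ‖B x‖ ≤ M)
    (f : EuclideanSpace ℝ (Fin n) → ℝ) (hf : Continuous f) (hfc : HasCompactSupport f)
    (γA γB : ℝ) (hγ : (n : ℝ) < γA + γB)
    (S : Set (EuclideanSpace ℝ (Fin n))) (hS : IsCompact S)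
    (hcomm : ∀ x y : EuclideanSpace ℝ (Fin n), x - y ∉ S → A x * B y = B y * A x) :
    Tendsto (fun R : ℝ =>
        ‖(R ^ (-γA) • ∫ x : EuclideanSpace ℝ (Fin n), f (R⁻¹ • x) • A x) *
            (R ^ (-γB) • ∫ x : EuclideanSpace ℝ (Fin n), f (R⁻¹ • x) • B x) -
          (R ^ (-γB) • ∫ x : EuclideanSpace ℝ (Fin n), f (R⁻¹ • x) • B x) *
            (R ^ (-γA) • ∫ x : EuclideanSpace ℝ (Fin n), f (R⁻¹ • x) • A x)‖)
      atTop (𝓝 0) := by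
  obtain ⟨C, hfC⟩ := hf.bounded_above_of_compact_support hfc
  set K := 2 * (C * M) * (C * M) * volume.real S * volume.real (tsupport f)
  have hlim : Tendsto (fun R : ℝ ↦ K * R ^ ((n : ℝ) - (γA + γB))) atTop (𝓝 0) := by
    simpa [neg_sub] using (tendsto_rpow_neg_atTop (sub_pos.2 hγ)).const_mul K
  refine squeeze_zero' (Eventually.of_forall fun R ↦ norm_nonneg _)
    ((eventually_gt_atTop 0).mono fun R hR ↦ ?_) hlim
  have hrpow : R ^ ((n : ℝ) - (γA + γB)) = R ^ (-γA) * R ^ (-γB) * R ^ n := by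
    rw [← rpow_natCast, ← rpow_add hR, ← rpow_add hR]
    ring_nf
  have hunscaled := norm_commutator_integral_comp_inv_smul_le (μ := volume) hA hB hAbd hBbd hf
    hfc hfC hS hcomm hR
  rw [finrank_euclideanSpace_fin] at hunscaled
  rw [smul_mul_smul_sub_smul_mul_smul, norm_smul, norm_of_nonneg (by positivity), hrpow]
  calc _ ≤ R ^ (-γA) * R ^ (-γB) * (2 * (C * M) * (C * M) * volume.real S *
        (R ^ n * volume.real (tsupport f))) := by gcongr
    _ = _ := by ring

/-- Vanishing of commutators of critically scaled, strictly localized observables: if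
`[A(x), B(y)] = 0` whenever `x − y` lies outside a compact set and `γ_A + γ_B > n`, then the
commutator of the block observables `A_R = R^{−γ_A} ∫ f(x/R) A(x) dx` and
`B_R = R^{−γ_B} ∫ f(x/R) B(x) dx` vanishes in operator norm as `R → ∞`. -/
theorem commutator_vanishes_strictly_localized {n : ℕ} (hn : 1 ≤ n)
    {H : Type*} [NormedAddCommGroup H] [InnerProductSpace ℂ H] [CompleteSpace H]
    (A B : EuclideanSpace ℝ (Fin n) → (H →L[ℂ] H))
    (hA : Continuous A) (hB : Continuous B)
    (M : ℝ) (hAbd : ∀ x, ‖A x‖ ≤ M) (hBbd : ∀ x, ‖B x‖ ≤ M)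
    (f : EuclideanSpace ℝ (Fin n) → ℝ) (hf : Continuous f) (hfc : HasCompactSupport f)
    (γA γB : ℝ) (hγ : (n : ℝ) < γA + γB)
    (S : Set (EuclideanSpace ℝ (Fin n))) (hS : IsCompact S)
    (hcomm : ∀ x y : EuclideanSpace ℝ (Fin n), x - y ∉ S → A x * B y = B y * A x) :
    Tendsto (fun R : ℝ =>
        ‖(R ^ (-γA) • ∫ x : EuclideanSpace ℝ (Fin n), f (R⁻¹ • x) • A x) *
            (R ^ (-γB) • ∫ x : EuclideanSpace ℝ (Fin n), f (R⁻¹ • x) • B x) -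
          (R ^ (-γB) • ∫ x : EuclideanSpace ℝ (Fin n), f (R⁻¹ • x) • B x) *
            (R ^ (-γA) • ∫ x : EuclideanSpace ℝ (Fin n), f (R⁻¹ • x) • A x)‖)
      atTop (𝓝 0) :=
  commutator_vanishes_strictly_localized_general A B hA hB M hAbd hBbd f hf hfc γA γB hγ S hS hcomm
end

section
/- Strip Liouville theorem underlying critical slowing down: let β > 0 and let F : ℂ → ℂ be a function that is continuous on the closed strip {z ∈ ℂ : 0 ≤ Im z ≤ β}, holomorphic on the open strip {z ∈ ℂ : 0 < Im z < β}, bounded on the closed strip, and satisfies F(t) = F(t + iβ) for all t ∈ ℝ. Then F is constant on the closed strip. -/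
/-!
Extend `F` to `ℂ` with period `β * I`. The boundary condition `F t = F (t + β * I)` makes the
extension continuous, and it is holomorphic off the lines `Im z ∈ β ℤ`. It is holomorphic across
these lines as well, by Morera's theorem: a rectangle crossing such a line splits into two
rectangles with an edge on it, and Cauchy's theorem applies to each since the function is
continuous up to that edge. The extension is thus a bounded entire function, constant by
Liouville's theorem.
-/

open Complex Filter Real Topology

open Set intervalIntegral MeasureTheory
open scoped Interval

namespace Complex

section HorizontalStrip

variable {E : Type*} [NormedAddCommGroup E] [NormedSpace ℂ E]

lemma wedgeIntegral_add_wedgeIntegral_split_im {f : ℂ → E} {z w : ℂ} {c : ℝ}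
    (hf : ContinuousOn f ([[z.re, w.re]] ×ℂ ([[z.im, c]] ∪ [[c, w.im]]))) :
    wedgeIntegral z w f + wedgeIntegral w z f =
      (wedgeIntegral z (w.re + c * I) f + wedgeIntegral (w.re + c * I) z f) +
      (wedgeIntegral (z.re + c * I) w f + wedgeIntegral w (z.re + c * I) f) := by
  have hvert : ∀ x ∈ [[z.re, w.re]], ∀ y₁ y₂, [[y₁, y₂]] ⊆ [[z.im, c]] ∪ [[c, w.im]] →
      IntervalIntegrable (fun y : ℝ => f ((x : ℂ) + y * I)) volume y₁ y₂ := fun x hx y₁ y₂ hy =>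
    (hf.comp (by fun_prop) fun y hy' => by
      simpa [mem_reProdIm] using ⟨hx, hy hy'⟩).intervalIntegrable
  simp only [wedgeIntegral_add_wedgeIntegral_eq, add_re, add_im, ofReal_re, ofReal_im, mul_re,
    mul_im, I_re, I_im, mul_zero, mul_one, sub_zero, zero_add, add_zero]
  rw [← integral_add_adjacent_intervals (b := c) (hvert w.re right_mem_uIcc _ _ subset_union_left)
      (hvert w.re right_mem_uIcc _ _ subset_union_right),
    ← integral_add_adjacent_intervals (b := c) (hvert z.re left_mem_uIcc _ _ subset_union_left)
      (hvert z.re left_mem_uIcc _ _ subset_union_right)]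
  simp only [smul_add]
  abel

lemma wedgeIntegral_add_wedgeIntegral_eq_zero_of_notMem_Ioo {f : ℂ → E} {z w : ℂ} {a b c : ℝ}
    (hzw : [[z.im, w.im]] ⊆ Ioo a b) (hc : c ∉ Ioo (min z.im w.im) (max z.im w.im))
    (hf : ContinuousOn f (im ⁻¹' Ioo a b))
    (hd : DifferentiableOn ℂ f (im ⁻¹' Ioo a c ∪ im ⁻¹' Ioo c b)) :
    wedgeIntegral z w f + wedgeIntegral w z f = 0 := by
  rw [wedgeIntegral_add_wedgeIntegral_eq]
  refine integral_boundary_rect_eq_zero_of_continuousOn_of_differentiableOn f z w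
    (hf.mono fun p hp => hzw hp.2) (hd.mono fun p hp => ?_)
  have hpab : p.im ∈ Ioo a b := hzw (Ioo_subset_Icc_self hp.2)
  rcases lt_or_gt_of_ne (show p.im ≠ c by rintro rfl; exact hc hp.2) with h | h
  · exact Or.inl ⟨hpab.1, h⟩
  · exact Or.inr ⟨h, hpab.2⟩

theorem isConservativeOn_horizontalStrip {f : ℂ → E} {a b c : ℝ} (hc : c ∈ Ioo a b)
    (hf : ContinuousOn f (im ⁻¹' Ioo a b))
    (hlower : DifferentiableOn ℂ f (im ⁻¹' Ioo a c))
    (hupper : DifferentiableOn ℂ f (im ⁻¹' Ioo c b)) :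
    IsConservativeOn f (im ⁻¹' Ioo a b) := by
  intro z w hzw
  have hd := hlower.union_of_isOpen hupper (isOpen_Ioo.preimage continuous_im)
    (isOpen_Ioo.preimage continuous_im)
  have hz : z.im ∈ Ioo a b := (hzw ⟨left_mem_uIcc, left_mem_uIcc⟩ : z ∈ im ⁻¹' Ioo a b)
  have hw : w.im ∈ Ioo a b := (hzw ⟨right_mem_uIcc, right_mem_uIcc⟩ : w ∈ im ⁻¹' Ioo a b)
  have hsub : ∀ {y₁ y₂}, y₁ ∈ Ioo a b → y₂ ∈ Ioo a b → [[y₁, y₂]] ⊆ Ioo a b :=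
    fun h₁ h₂ => ordConnected_Ioo.uIcc_subset h₁ h₂
  have hc_end : ∀ y : ℝ, c ∉ Ioo (min y c) (max y c) := fun y h => by
    rcases le_total y c with hyc | hyc
    · simp [hyc] at h
    · simp [hyc] at h
  rw [← add_eq_zero_iff_eq_neg, wedgeIntegral_add_wedgeIntegral_split_im (c := c)]
  · rw [wedgeIntegral_add_wedgeIntegral_eq_zero_of_notMem_Ioo (by simpa using hsub hz hc)
        (by simpa using hc_end z.im) hf hd,
      wedgeIntegral_add_wedgeIntegral_eq_zero_of_notMem_Ioo (by simpa using hsub hc hw)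
        (by simpa [min_comm, max_comm] using hc_end w.im) hf hd, add_zero]
  · exact hf.mono fun p hp => (union_subset (hsub hz hc) (hsub hc hw)) hp.2

theorem differentiableOn_horizontalStrip {f : ℂ → E} [CompleteSpace E] {a b c : ℝ}
    (hc : c ∈ Ioo a b) (hf : ContinuousOn f (im ⁻¹' Ioo a b))
    (hlower : DifferentiableOn ℂ f (im ⁻¹' Ioo a c))
    (hupper : DifferentiableOn ℂ f (im ⁻¹' Ioo c b)) :
    DifferentiableOn ℂ f (im ⁻¹' Ioo a b) :=
  (isConservativeOn_and_continuousOn_iff_isDifferentiableOn (isOpen_Ioo.preimage continuous_im)).1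
    ⟨isConservativeOn_horizontalStrip hc hf hlower hupper, hf⟩

end HorizontalStrip

noncomputable def verticalPeriodicExtension {E : Type*} {β : ℝ} (hβ : 0 < β) (F : ℂ → E)
    (z : ℂ) : E :=
  F (z.re + toIcoMod hβ 0 z.im * I)

namespace verticalPeriodicExtension

variable {E : Type*} {β : ℝ} (hβ : 0 < β) {F : ℂ → E}

lemma periodic : Function.Periodic (verticalPeriodicExtension hβ F) (β * I) := fun z => by
  simp [verticalPeriodicExtension, toIcoMod_add_right]

lemma eq_of_im_mem_Ico {z : ℂ} (hz : z.im ∈ Ico 0 β) :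
    verticalPeriodicExtension hβ F z = F z := by
  rw [verticalPeriodicExtension, (toIcoMod_eq_self hβ).2 (by simpa using hz), re_add_im]

lemma eqOn_closedStrip (hper : ∀ t : ℝ, F t = F (t + β * I)) :
    EqOn (verticalPeriodicExtension hβ F) F (im ⁻¹' Icc 0 β) := by
  intro z ⟨h0, hβz⟩
  rcases hβz.lt_or_eq with hlt | heq
  · exact eq_of_im_mem_Ico hβ ⟨h0, hlt⟩
  · have hz : z = z.re + β * I := by simp [Complex.ext_iff, heq]
    rw [hz, periodic hβ, eq_of_im_mem_Ico hβ (by simpa using hβ), hper]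

lemma eqOn_lowerStrip (hper : ∀ t : ℝ, F t = F (t + β * I)) :
    EqOn (verticalPeriodicExtension hβ F) (fun z => F (z + β * I)) (im ⁻¹' Icc (-β) 0) := by
  intro z ⟨h0, hβz⟩
  rw [← periodic hβ z]
  exact eqOn_closedStrip hβ hper (by constructor <;> simp <;> linarith)

variable [NormedAddCommGroup E]

lemma norm_le {C : ℝ} (hbd : ∀ z : ℂ, 0 ≤ z.im → z.im ≤ β → ‖F z‖ ≤ C) (z : ℂ) :
    ‖verticalPeriodicExtension hβ F z‖ ≤ C := by
  obtain ⟨h0, hβz⟩ := toIcoMod_mem_Ico hβ 0 z.im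
  exact hbd _ (by simpa using h0) (by simpa using hβz.le)

lemma continuousOn_strip (hcont : ContinuousOn F (im ⁻¹' Icc 0 β))
    (hper : ∀ t : ℝ, F t = F (t + β * I)) :
    ContinuousOn (verticalPeriodicExtension hβ F) (im ⁻¹' Icc (-β) β) := by
  rw [← Icc_union_Icc_eq_Icc (neg_nonpos.2 hβ.le) hβ.le, preimage_union]
  refine ContinuousOn.union_of_isClosed ?_ (hcont.congr (eqOn_closedStrip hβ hper))
    (isClosed_Icc.preimage continuous_im) (isClosed_Icc.preimage continuous_im)
  refine (hcont.comp (by fun_prop) fun z hz => ?_).congr (eqOn_lowerStrip hβ hper)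
  obtain ⟨h0, h1⟩ := hz
  constructor <;> simp <;> linarith

variable [NormedSpace ℂ E] [CompleteSpace E]

lemma differentiableOn_strip (hcont : ContinuousOn F (im ⁻¹' Icc 0 β))
    (hholo : DifferentiableOn ℂ F (im ⁻¹' Ioo 0 β)) (hper : ∀ t : ℝ, F t = F (t + β * I)) :
    DifferentiableOn ℂ (verticalPeriodicExtension hβ F) (im ⁻¹' Ioo (-β) β) := by
  refine differentiableOn_horizontalStrip ⟨neg_lt_zero.2 hβ, hβ⟩
    ((continuousOn_strip hβ hcont hper).mono (preimage_mono Ioo_subset_Icc_self)) ?_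
    (hholo.congr fun z hz => eqOn_closedStrip hβ hper (Ioo_subset_Icc_self hz))
  refine (hholo.comp (differentiableOn_id.add_const _) fun z hz => ?_).congr
    fun z hz => eqOn_lowerStrip hβ hper (Ioo_subset_Icc_self hz)
  obtain ⟨h0, h1⟩ := hz
  constructor <;> simp <;> linarith

theorem differentiable (hcont : ContinuousOn F (im ⁻¹' Icc 0 β))
    (hholo : DifferentiableOn ℂ F (im ⁻¹' Ioo 0 β)) (hper : ∀ t : ℝ, F t = F (t + β * I)) :
    Differentiable ℂ (verticalPeriodicExtension hβ F) := by
  intro z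
  set n := toIcoDiv hβ 0 z.im
  have hmem : z - n * (β * I) ∈ im ⁻¹' Ioo (-β) β := by
    obtain ⟨h0, h1⟩ := toIcoMod_mem_Ico hβ 0 z.im
    rw [toIcoMod, zsmul_eq_mul] at h0 h1
    constructor <;> simp <;> linarith
  have hat := (differentiableOn_strip hβ hcont hholo hper).differentiableAt
    ((isOpen_Ioo.preimage continuous_im).mem_nhds hmem)
  simpa [Function.comp_def, (periodic hβ).sub_int_mul_eq] using
    hat.comp z (differentiableAt_id.sub_const (n * (β * I)))

end verticalPeriodicExtension

end Complex

/-- Strip Liouville theorem underlying critical slowing down: a function continuous and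
bounded on the closed strip `0 ≤ Im z ≤ β`, holomorphic on the open strip `0 < Im z < β`,
whose boundary values satisfy `F(t) = F(t + iβ)` for all real `t`, is constant on the
closed strip. -/
theorem strip_liouville (β : ℝ) (hβ : 0 < β) (F : ℂ → ℂ)
    (hcont : ContinuousOn F {z : ℂ | 0 ≤ z.im ∧ z.im ≤ β})
    (hholo : DifferentiableOn ℂ F {z : ℂ | 0 < z.im ∧ z.im < β})
    (C : ℝ) (hbd : ∀ z : ℂ, 0 ≤ z.im → z.im ≤ β → ‖F z‖ ≤ C)
    (hper : ∀ t : ℝ, F t = F (t + β * Complex.I)) :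
    ∀ z w : ℂ, 0 ≤ z.im → z.im ≤ β → 0 ≤ w.im → w.im ≤ β → F z = F w := by
  intro z w hz₀ hzβ hw₀ hwβ
  have hbounded : Bornology.IsBounded (range (verticalPeriodicExtension hβ F)) :=
    isBounded_iff_forall_norm_le.2
      ⟨C, forall_mem_range.2 (verticalPeriodicExtension.norm_le hβ hbd)⟩
  have hentire := verticalPeriodicExtension.differentiable hβ hcont hholo hper
  rw [← verticalPeriodicExtension.eqOn_closedStrip hβ hper ⟨hz₀, hzβ⟩,
    ← verticalPeriodicExtension.eqOn_closedStrip hβ hper ⟨hw₀, hwβ⟩]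
  exact hentire.apply_eq_apply_of_bounded hbounded z w
end

section
/- Anomalous scaling limit at the critical point for a sharp excitation branch with dispersion |k|^α: let n ≥ 1, 0 < α < n, β > 0, Y ∈ ℝⁿ, let j : ℝⁿ → ℂ be bounded, measurable, and continuous at 0, and let g : ℝⁿ → ℝ be a nonnegative measurable function with ∫_{ℝⁿ} (1 + |k|^{−α}) g(k) dk < ∞. Then lim_{R→∞} ∫_{ℝⁿ∖{0}} e^{i⟨k,Y⟩} · R^{−α} · (1 − e^{−β(|k|/R)^α})^{−1} · j(k/R) · g(k) dk = ∫_{ℝⁿ∖{0}} e^{i⟨k,Y⟩} · (β |k|^α)^{−1} · j(0) · g(k) dk; in particular for j(0) ≠ 0 and g not almost everywhere zero with Y = 0, the limit of the autocorrelation integral is finite and (for g ≥ 0, j(0) > 0) nonzero. -/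
open MeasureTheory Complex Filter Real Topology

/-!
Substituting `t = R^(-α)` turns the scaled Bose weight `R^(-α) (1 - e^(-β (|k|/R)^α))⁻¹` into
`t (1 - e^(-c t))⁻¹` with `c = β |k|^α`, which tends to `1/c` as `t → 0⁺` because `1 - e^(-c t)`
has derivative `c` at `0`. Since `(1 - e^(-x))⁻¹ ≤ 1 + 1/x`, the weight is at most
`1 + β⁻¹ |k|^(-α)` for `R ≥ 1`, so the integrability of `(1 + |k|^(-α)) g` makes dominated
convergence applicable. At `Y = 0` the limit is `j(0)` times the integral of `g / (β |k|^α) ≥ 0`,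
which is positive because `g` is not a.e. zero and points are null.
-/

lemma inv_one_sub_exp_neg_le {x : ℝ} (hx : 0 < x) : (1 - Real.exp (-x))⁻¹ ≤ 1 + x⁻¹ := by
  have hexp : Real.exp (-x) ≤ (1 + x)⁻¹ := by
    rw [Real.exp_neg]
    exact inv_anti₀ (by positivity) (by linarith [Real.add_one_le_exp x])
  have hfrac : x / (1 + x) = 1 - (1 + x)⁻¹ := by field_simp; ring
  calc (1 - Real.exp (-x))⁻¹ ≤ (x / (1 + x))⁻¹ := by gcongr; linarith
    _ = 1 + x⁻¹ := by rw [inv_div, add_div, div_self hx.ne', one_div, add_comm]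

lemma tendsto_mul_inv_one_sub_exp_neg {c : ℝ} (hc : 0 < c) :
    Tendsto (fun t : ℝ => t * (1 - Real.exp (-(c * t)))⁻¹) (𝓝[>] 0) (𝓝 c⁻¹) := by
  have hderiv : HasDerivAt (fun t : ℝ => 1 - Real.exp (-(c * t))) c 0 := by
    simpa using (((hasDerivAt_id (0 : ℝ)).const_mul c).neg.exp).const_sub 1
  have hslope := ((hasDerivAt_iff_tendsto_slope.mp hderiv).inv₀ hc.ne').mono_left
    (nhdsWithin_mono 0 fun t (ht : 0 < t) => ht.ne')
  refine hslope.congr fun t => ?_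
  simp [slope_def_field, div_eq_mul_inv]

/-- `R^(-α) J₊^β(k / R) / j(k / R)` at `r = |k|`, for the dispersion law `e(k) = |k|^α`. -/
noncomputable def scaledBoseWeight (α β R r : ℝ) : ℝ :=
  R ^ (-α) * (1 - Real.exp (-(β * (r / R) ^ α)))⁻¹

section scaledBoseWeight

variable {α β R r : ℝ}

lemma mul_div_rpow_eq_mul_mul_rpow_neg (hR : 0 < R) (hr : 0 ≤ r) :
    β * (r / R) ^ α = β * r ^ α * R ^ (-α) := by
  rw [div_rpow hr hR.le, rpow_neg hR.le, div_eq_mul_inv, mul_assoc]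

lemma scaledBoseWeight_nonneg (hβ : 0 ≤ β) (hR : 0 ≤ R) (hr : 0 ≤ r) :
    0 ≤ scaledBoseWeight α β R r := by
  have : Real.exp (-(β * (r / R) ^ α)) ≤ 1 :=
    Real.exp_le_one_iff.mpr (neg_nonpos.mpr (by positivity))
  unfold scaledBoseWeight
  exact mul_nonneg (rpow_nonneg hR _) (inv_nonneg.mpr (by linarith))

lemma scaledBoseWeight_le (hα : 0 ≤ α) (hβ : 0 < β) (hR : 1 ≤ R) (hr : 0 < r) :
    scaledBoseWeight α β R r ≤ 1 + β⁻¹ * r ^ (-α) := by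
  have hR0 : 0 < R := one_pos.trans_le hR
  calc scaledBoseWeight α β R r ≤ R ^ (-α) * (1 + (β * r ^ α * R ^ (-α))⁻¹) := by
        rw [scaledBoseWeight, mul_div_rpow_eq_mul_mul_rpow_neg hR0 hr.le]
        gcongr
        exact inv_one_sub_exp_neg_le (by positivity)
    _ = R ^ (-α) + β⁻¹ * r ^ (-α) := by
        rw [rpow_neg hr.le]
        field_simp
    _ ≤ 1 + β⁻¹ * r ^ (-α) := by
        gcongr
        exact rpow_le_one_of_one_le_of_nonpos hR (neg_nonpos.mpr hα)

lemma tendsto_scaledBoseWeight (hα : 0 < α) (hβ : 0 < β) (hr : 0 < r) :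
    Tendsto (fun R => scaledBoseWeight α β R r) atTop (𝓝 (β * r ^ α)⁻¹) := by
  have hdecay : Tendsto (fun R : ℝ => R ^ (-α)) atTop (𝓝[>] 0) :=
    tendsto_nhdsWithin_iff.mpr ⟨tendsto_rpow_neg_atTop hα,
      (eventually_gt_atTop 0).mono fun R hR => rpow_pos_of_pos hR _⟩
  refine ((tendsto_mul_inv_one_sub_exp_neg (by positivity)).comp hdecay).congr' ?_
  filter_upwards [eventually_gt_atTop 0] with R hR
  rw [Function.comp_apply, scaledBoseWeight, mul_div_rpow_eq_mul_mul_rpow_neg hR hr.le]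

end scaledBoseWeight

section

variable {E : Type*} [NormedAddCommGroup E] [MeasurableSpace E] [BorelSpace E]
  {μ : Measure E} {α β : ℝ} {g : E → ℝ}

lemma integrable_rpow_neg_mul_of_integrable_one_add (hgmeas : Measurable g)
    (hgnn : ∀ k, 0 ≤ g k) (hgint : Integrable (fun k => (1 + ‖k‖ ^ (-α)) * g k) μ) :
    Integrable (fun k => ‖k‖ ^ (-α) * g k) μ := by
  refine hgint.mono' (by fun_prop) (Eventually.of_forall fun k => ?_)
  have := rpow_nonneg (norm_nonneg k) (-α)
  rw [norm_of_nonneg (mul_nonneg this (hgnn k))]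
  exact mul_le_mul_of_nonneg_right (by linarith) (hgnn k)

lemma integral_compl_zero_inv_mul_rpow_mul_pos [NullSingletonClass μ] (hβ : 0 < β)
    (hgmeas : Measurable g) (hgnn : ∀ k, 0 ≤ g k)
    (hgint : Integrable (fun k => (1 + ‖k‖ ^ (-α)) * g k) μ) (hg : ¬ ∀ᵐ k ∂μ, g k = 0) :
    0 < ∫ k in ({0} : Set E)ᶜ, (β * ‖k‖ ^ α)⁻¹ * g k ∂μ := by
  have hint : Integrable (fun k => (β * ‖k‖ ^ α)⁻¹ * g k) μ := by
    refine ((integrable_rpow_neg_mul_of_integrable_one_add hgmeas hgnn hgint).const_mul β⁻¹).congr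
      (Eventually.of_forall fun k => ?_)
    simp only [mul_inv, rpow_neg (norm_nonneg k), mul_assoc]
  rw [restrict_compl_singleton,
    integral_pos_iff_support_of_nonneg (fun k => mul_nonneg (by positivity) (hgnn k)) hint]
  have hsupport : Function.support g \ {0} ⊆ Function.support fun k => (β * ‖k‖ ^ α)⁻¹ * g k :=
    fun k ⟨hgk, hk⟩ => mul_ne_zero (by have := norm_pos_iff.mpr hk; positivity) hgk
  calc (0 : ENNReal) < μ (Function.support g \ {0}) := by
        rw [measure_sdiff_null (measure_singleton 0), pos_iff_ne_zero]
        exact fun h => hg (ae_iff.mpr h)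
    _ ≤ _ := measure_mono hsupport

theorem tendsto_integral_scaledBoseWeight [InnerProductSpace ℝ E] (hα : 0 < α) (hβ : 0 < β)
    (Y : E) {j : E → ℂ} (hjmeas : Measurable j) {Cj : ℝ} (hjbd : ∀ k, ‖j k‖ ≤ Cj)
    (hjcont : ContinuousAt j 0) (hgmeas : Measurable g) (hgnn : ∀ k, 0 ≤ g k)
    (hgint : Integrable (fun k => (1 + ‖k‖ ^ (-α)) * g k) μ) :
    Tendsto (fun R : ℝ => ∫ k in ({0} : Set E)ᶜ,
        Complex.exp (Complex.I * ((inner ℝ k Y : ℝ) : ℂ)) * ((R ^ (-α) : ℝ) : ℂ) *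
          (1 - ((Real.exp (-(β * (‖k‖ / R) ^ α)) : ℝ) : ℂ))⁻¹ * j (R⁻¹ • k) * ((g k : ℝ) : ℂ) ∂μ)
      atTop (𝓝 (∫ k in ({0} : Set E)ᶜ,
        Complex.exp (Complex.I * ((inner ℝ k Y : ℝ) : ℂ)) * (((β * ‖k‖ ^ α)⁻¹ : ℝ) : ℂ) *
          j 0 * ((g k : ℝ) : ℂ) ∂μ)) := by
  have hweight : ∀ (R : ℝ) (k : E),
      ((R ^ (-α) : ℝ) : ℂ) * (1 - ((Real.exp (-(β * (‖k‖ / R) ^ α)) : ℝ) : ℂ))⁻¹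
        = ((scaledBoseWeight α β R ‖k‖ : ℝ) : ℂ) := by
    intro R k
    push_cast [scaledBoseWeight]
    rfl
  simp_rw [mul_assoc _ _ (_ : ℂ)⁻¹, hweight]
  have hnorm_pos : ∀ᵐ k ∂μ.restrict ({0} : Set E)ᶜ, 0 < ‖k‖ :=
    (ae_restrict_mem (measurableSet_singleton 0).compl).mono fun k hk => norm_pos_iff.mpr hk
  refine tendsto_integral_filter_of_dominated_convergence
    (fun k => max 1 β⁻¹ * Cj * ((1 + ‖k‖ ^ (-α)) * g k)) ?_ ?_ (hgint.const_mul _).restrict ?_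
  · refine Eventually.of_forall fun R => Measurable.aestronglyMeasurable ?_
    have : Measurable fun k : E => scaledBoseWeight α β R ‖k‖ := by
      unfold scaledBoseWeight
      measurability
    have := hjmeas.comp (continuous_const_smul R⁻¹).measurable
    fun_prop
  · filter_upwards [eventually_ge_atTop 1] with R hR
    filter_upwards [hnorm_pos] with k hk
    have hw := scaledBoseWeight_le hα.le hβ hR hk
    have hwnn := scaledBoseWeight_nonneg (α := α) hβ.le (zero_le_one.trans hR) hk.le
    rw [norm_mul, norm_mul, norm_mul, norm_exp_I_mul_ofReal, norm_real, norm_real,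
      norm_of_nonneg hwnn, norm_of_nonneg (hgnn k), one_mul]
    have hM : 1 + β⁻¹ * ‖k‖ ^ (-α) ≤ max 1 β⁻¹ * (1 + ‖k‖ ^ (-α)) := by
      have := rpow_nonneg (norm_nonneg k) (-α)
      nlinarith [le_max_left 1 β⁻¹, le_max_right 1 β⁻¹]
    calc scaledBoseWeight α β R ‖k‖ * ‖j (R⁻¹ • k)‖ * g k
        ≤ max 1 β⁻¹ * (1 + ‖k‖ ^ (-α)) * Cj * g k := by
          gcongr
          · exact hgnn k
          · exact hw.trans hM
          · exact hjbd _
      _ = max 1 β⁻¹ * Cj * ((1 + ‖k‖ ^ (-α)) * g k) := by ring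
  · filter_upwards [hnorm_pos] with k hk
    have hscale : Tendsto (fun R : ℝ => R⁻¹ • k) atTop (𝓝 0) := by
      simpa using (tendsto_inv_atTop_zero (𝕜 := ℝ)).smul_const k
    exact ((tendsto_const_nhds.mul ((continuous_ofReal.tendsto _).comp
      (tendsto_scaledBoseWeight hα hβ hk))).mul (hjcont.tendsto.comp hscale)).mul
      tendsto_const_nhds

end

theorem anomalous_scaling_limit_general {n : ℕ} (hn : 1 ≤ n) (α : ℝ) (hα0 : 0 < α)
    (β : ℝ) (hβ : 0 < β) (Y : EuclideanSpace ℝ (Fin n))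
    (j : EuclideanSpace ℝ (Fin n) → ℂ) (hjmeas : Measurable j)
    (Cj : ℝ) (hjbd : ∀ k, ‖j k‖ ≤ Cj) (hjcont : ContinuousAt j 0)
    (g : EuclideanSpace ℝ (Fin n) → ℝ) (hgmeas : Measurable g) (hgnn : ∀ k, 0 ≤ g k)
    (hgint : Integrable (fun k : EuclideanSpace ℝ (Fin n) => (1 + ‖k‖ ^ (-α)) * g k)
      (volume : Measure (EuclideanSpace ℝ (Fin n)))) :
    Tendsto (fun R : ℝ =>
        ∫ k in ({0} : Set (EuclideanSpace ℝ (Fin n)))ᶜ,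
          Complex.exp (Complex.I * ((inner ℝ k Y : ℝ) : ℂ)) * ((R ^ (-α) : ℝ) : ℂ) *
            (1 - ((Real.exp (-(β * (‖k‖ / R) ^ α)) : ℝ) : ℂ))⁻¹ * j (R⁻¹ • k) *
            ((g k : ℝ) : ℂ))
      atTop
      (𝓝 (∫ k in ({0} : Set (EuclideanSpace ℝ (Fin n)))ᶜ,
        Complex.exp (Complex.I * ((inner ℝ k Y : ℝ) : ℂ)) * (((β * ‖k‖ ^ α)⁻¹ : ℝ) : ℂ) *
          j 0 * ((g k : ℝ) : ℂ))) ∧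
    (Y = 0 → (j 0).im = 0 → 0 < (j 0).re → ¬ (∀ᵐ k ∂(volume : Measure (EuclideanSpace ℝ (Fin n))), g k = 0) →
      (∫ k in ({0} : Set (EuclideanSpace ℝ (Fin n)))ᶜ,
        Complex.exp (Complex.I * ((inner ℝ k Y : ℝ) : ℂ)) * (((β * ‖k‖ ^ α)⁻¹ : ℝ) : ℂ) *
          j 0 * ((g k : ℝ) : ℂ)) ≠ 0) := by
  refine ⟨tendsto_integral_scaledBoseWeight hα0 hβ Y hjmeas hjbd hjcont hgmeas hgnn hgint, ?_⟩
  rintro rfl - hre hg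
  have : Nonempty (Fin n) := ⟨⟨0, hn⟩⟩
  have hpos := integral_compl_zero_inv_mul_rpow_mul_pos hβ hgmeas hgnn hgint hg
  have hj0 : j 0 ≠ 0 := fun h => by simp [h] at hre
  have hintegrand : ∀ k : EuclideanSpace ℝ (Fin n),
      Complex.exp (Complex.I * ((inner ℝ k 0 : ℝ) : ℂ)) * (((β * ‖k‖ ^ α)⁻¹ : ℝ) : ℂ) * j 0 *
        ((g k : ℝ) : ℂ) = ((β * ‖k‖ ^ α)⁻¹ * g k) • j 0 := by
    intro k
    simp only [inner_zero_right, ofReal_zero, mul_zero, Complex.exp_zero, one_mul, real_smul]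
    push_cast
    ring
  simp_rw [hintegrand, integral_smul_const]
  exact smul_ne_zero hpos.ne' hj0

/-- Anomalous scaling limit at the critical point for a sharp excitation branch with
dispersion `e(k) = |k|^α` at chemical potential `μ = 0`: the scaled Bose-weighted integral
converges to the classical `1/(β|k|^α)` weighted integral; in particular for `j(0) > 0`
(real) and `g` not a.e. zero the limit autocorrelation (at `Y = 0`) is finite and nonzero. -/
theorem anomalous_scaling_limit {n : ℕ} (hn : 1 ≤ n) (α : ℝ) (hα0 : 0 < α) (hαn : α < n)
    (β : ℝ) (hβ : 0 < β) (Y : EuclideanSpace ℝ (Fin n))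
    (j : EuclideanSpace ℝ (Fin n) → ℂ) (hjmeas : Measurable j)
    (Cj : ℝ) (hjbd : ∀ k, ‖j k‖ ≤ Cj) (hjcont : ContinuousAt j 0)
    (g : EuclideanSpace ℝ (Fin n) → ℝ) (hgmeas : Measurable g) (hgnn : ∀ k, 0 ≤ g k)
    (hgint : Integrable (fun k : EuclideanSpace ℝ (Fin n) => (1 + ‖k‖ ^ (-α)) * g k)
      (volume : Measure (EuclideanSpace ℝ (Fin n)))) :
    Tendsto (fun R : ℝ =>
        ∫ k in ({0} : Set (EuclideanSpace ℝ (Fin n)))ᶜ,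
          Complex.exp (Complex.I * ((inner ℝ k Y : ℝ) : ℂ)) * ((R ^ (-α) : ℝ) : ℂ) *
            (1 - ((Real.exp (-(β * (‖k‖ / R) ^ α)) : ℝ) : ℂ))⁻¹ * j (R⁻¹ • k) *
            ((g k : ℝ) : ℂ))
      atTop
      (𝓝 (∫ k in ({0} : Set (EuclideanSpace ℝ (Fin n)))ᶜ,
        Complex.exp (Complex.I * ((inner ℝ k Y : ℝ) : ℂ)) * (((β * ‖k‖ ^ α)⁻¹ : ℝ) : ℂ) *
          j 0 * ((g k : ℝ) : ℂ))) ∧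
    (Y = 0 → (j 0).im = 0 → 0 < (j 0).re → ¬ (∀ᵐ k ∂(volume : Measure (EuclideanSpace ℝ (Fin n))), g k = 0) →
      (∫ k in ({0} : Set (EuclideanSpace ℝ (Fin n)))ᶜ,
        Complex.exp (Complex.I * ((inner ℝ k Y : ℝ) : ℂ)) * (((β * ‖k‖ ^ α)⁻¹ : ℝ) : ℂ) *
          j 0 * ((g k : ℝ) : ℂ)) ≠ 0) :=
  anomalous_scaling_limit_general hn α hα0 β hβ Y j hjmeas Cj hjbd hjcont g hgmeas hgnn hgint
end
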